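/- arXiv:2403.01703 — 6 statements merged into one kernel-verified Lean document; each statement's English description precedes it below -/
import Mathlib

section
/- Let Γ be an abelian group, k a commutative ring, R a Γ-graded k-algebra whose homogeneous components are k-submodules, and I a graded two-sided ideal of R (so that R/I is again a Γ-graded k-algebra). Then the map sending ∑_γ (r^{(γ)} + I) p_γ to ∑_γ r^{(γ)} p_γ + I#Γ is a well-defined isomorphism of (non-unital) k-algebras (R/I)#Γ ≅ (R#Γ)/(I#Γ). -/
/-!
Reducing coefficients modulo `I` is a surjection `R#Γ → (R/I)#Γ` with kernel `I#Γ`, hence induces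
the linear isomorphism. It is multiplicative because the smash product is assembled from the
multiplication and the homogeneous projections alone, and reduction modulo `I` commutes with both.
-/

/-- The smash-product multiplication on formal sums `∑_γ r^{(γ)} p_γ` (finitely supported
functions `Γ →₀ S`), relative to a multiplication `mul` on `S` and a family of
homogeneous-component projections `D : S → Γ → S`: it is the bilinear extension of
`(r p_α)·(s p_β) = (r · s_{α−β}) p_β`. -/
noncomputable def smashMulWith {Γ S : Type*} [AddCommGroup Γ] [AddCommMonoid S]
    (mul : S → S → S) (D : S → Γ → S) (f g : Γ →₀ S) : Γ →₀ S :=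
  f.sum fun α r => g.sum fun β s => Finsupp.single β (mul r (D s (α - β)))

/-- For a two-sided ideal `I` of a `k`-algebra `R`, the ideal `I#Γ` of the smash
product `R#Γ`, consisting of all formal sums all of whose coefficients lie in `I`,
here regarded as a `k`-submodule of `Γ →₀ R`. -/
def smashIdeal (Γ : Type*) {k R : Type*} [CommRing k] [Ring R] [Algebra k R]
    (I : Ideal R) : Submodule k (Γ →₀ R) where
  carrier := {f | ∀ γ, f γ ∈ I}
  add_mem' := fun {a b} ha hb γ => by
    rw [Finsupp.add_apply]; exact I.add_mem (ha γ) (hb γ)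
  zero_mem' := fun γ => by simp
  smul_mem' := fun c f hf γ => by
    rw [Finsupp.smul_apply, Algebra.smul_def]
    exact I.mul_mem_left _ (hf γ)

theorem smashMulWith_mapRange {Γ S T : Type*} [AddCommGroup Γ] [AddCommMonoid S]
    [AddCommMonoid T] {mul : S → S → S} {D : S → Γ → S} {mul' : T → T → T} {D' : T → Γ → T}
    (π : S →+ T) (hmul : ∀ r s, mul' (π r) (π s) = π (mul r s))
    (hD : ∀ s γ, D' (π s) γ = π (D s γ)) (hzero_mul : ∀ y, mul' 0 y = 0)
    (hmul_zero : ∀ x, mul' x 0 = 0) (hD_zero : ∀ γ, D' 0 γ = 0) (f g : Γ →₀ S) :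
    smashMulWith mul' D' (f.mapRange π π.map_zero) (g.mapRange π π.map_zero) =
      (smashMulWith mul D f g).mapRange π π.map_zero := by
  simp only [smashMulWith, ← Finsupp.mapRange.addMonoidHom_apply, map_finsuppSum]
  rw [Finsupp.mapRange.addMonoidHom_apply, Finsupp.sum_mapRange_index fun α => by
    simp only [hzero_mul, Finsupp.single_zero, Finsupp.sum_fun_zero]]
  refine Finsupp.sum_congr fun α _ => ?_
  rw [Finsupp.mapRange.addMonoidHom_apply, Finsupp.sum_mapRange_index fun β => by
    rw [hD_zero, hmul_zero, Finsupp.single_zero]]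
  refine Finsupp.sum_congr fun β _ => ?_
  rw [hD, hmul, Finsupp.mapRange.addMonoidHom_apply, Finsupp.mapRange_single]

section QuotientSmashIdeal

variable (Γ k : Type*) {R : Type*} [CommRing k] [Ring R] [Algebra k R] (I : Ideal R)

theorem smashIdeal_eq_ker_mapRange :
    smashIdeal Γ (k := k) I =
      LinearMap.ker (Finsupp.mapRange.linearMap (α := Γ) (I.mkQ.restrictScalars k)) := by
  ext f
  simp [smashIdeal, Finsupp.ext_iff, Submodule.Quotient.mk_eq_zero]

noncomputable def quotientSmashIdealEquiv :
    ((Γ →₀ R) ⧸ smashIdeal Γ (k := k) I) ≃ₗ[k] (Γ →₀ R ⧸ I) :=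
  (Submodule.quotEquivOfEq _ _ (smashIdeal_eq_ker_mapRange Γ k I)).trans
    (LinearMap.quotKerEquivOfSurjective _
      (Finsupp.mapRange_surjective _ (map_zero _) I.mkQ_surjective))

theorem quotientSmashIdealEquiv_mk (f : Γ →₀ R) :
    quotientSmashIdealEquiv Γ k I (Submodule.Quotient.mk f) = f.mapRange I.mkQ (map_zero _) :=
  rfl

end QuotientSmashIdeal

theorem smash_product_of_quotient_iso_general {Γ : Type*} [AddCommGroup Γ] [DecidableEq Γ]
    {k : Type*} [CommRing k] {R : Type*} [Ring R] [Algebra k R]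
    (𝒜 : Γ → Submodule k R) [GradedRing 𝒜]
    (I : Ideal R)
    (mulQ : (R ⧸ I) → (R ⧸ I) → (R ⧸ I))
    (hmulQ : ∀ r s : R, mulQ (I.mkQ r) (I.mkQ s) = I.mkQ (r * s))
    (D : (R ⧸ I) → Γ → (R ⧸ I))
    (hD : ∀ (r : R) (γ : Γ), D (I.mkQ r) γ = I.mkQ ((DirectSum.decompose 𝒜 r γ : 𝒜 γ) : R)) :
    ∃ e : (Γ →₀ (R ⧸ I)) ≃ₗ[k] ((Γ →₀ R) ⧸ smashIdeal Γ (k := k) I),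
      (∀ f : Γ →₀ R,
        e (f.mapRange I.mkQ (map_zero _)) = Submodule.Quotient.mk f) ∧
      (∀ f g : Γ →₀ R,
        e (smashMulWith mulQ D (f.mapRange I.mkQ (map_zero _))
            (g.mapRange I.mkQ (map_zero _)))
          = Submodule.Quotient.mk
              (smashMulWith (· * ·)
                (fun (s : R) (δ : Γ) => ((DirectSum.decompose 𝒜 s δ : 𝒜 δ) : R)) f g)) := by
  set e := (quotientSmashIdealEquiv Γ k I).symm
  have he : ∀ f : Γ →₀ R, e (f.mapRange I.mkQ (map_zero _)) = Submodule.Quotient.mk f :=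
    fun f => (LinearEquiv.symm_apply_eq _).2 (quotientSmashIdealEquiv_mk Γ k I f).symm
  have hzero_mulQ (x : R ⧸ I) : mulQ 0 x = 0 := by
    obtain ⟨r, rfl⟩ := I.mkQ_surjective x
    simpa using hmulQ 0 r
  have hmulQ_zero (x : R ⧸ I) : mulQ x 0 = 0 := by
    obtain ⟨r, rfl⟩ := I.mkQ_surjective x
    simpa using hmulQ r 0
  have hD_zero (γ : Γ) : D 0 γ = 0 := by simpa using hD 0 γ
  refine ⟨e, he, fun f g => ?_⟩
  rw [← he]
  exact congrArg e (smashMulWith_mapRange I.mkQ.toAddMonoidHom hmulQ hD hzero_mulQ hmulQ_zero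
    hD_zero f g)

/-- Let `Γ` be an abelian group, `k` a commutative ring, `R` a `Γ`-graded `k`-algebra whose
homogeneous components are `k`-submodules, and `I` a graded two-sided ideal of `R`
(the quotient `R/I` then inherits a multiplication `mulQ` and homogeneous-component
projections `D` from `R`).  Then the map `∑_γ (r^{(γ)} + I) p_γ ↦ ∑_γ r^{(γ)} p_γ + I#Γ`
is a well-defined isomorphism of (non-unital) `k`-algebras `(R/I)#Γ ≅ (R#Γ)/(I#Γ)`:
a `k`-linear equivalence carrying the smash multiplication of `(R/I)#Γ` to the
multiplication that `(R#Γ)/(I#Γ)` inherits from the smash multiplication of `R#Γ`. -/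
theorem smash_product_of_quotient_iso {Γ : Type*} [AddCommGroup Γ] [DecidableEq Γ]
    {k : Type*} [CommRing k] {R : Type*} [Ring R] [Algebra k R]
    (𝒜 : Γ → Submodule k R) [GradedRing 𝒜]
    (I : Ideal R)
    (hI2 : ∀ (a : R), ∀ x ∈ I, x * a ∈ I)
    (hIhom : ∀ x ∈ I, ∀ γ : Γ, ((DirectSum.decompose 𝒜 x γ : 𝒜 γ) : R) ∈ I)
    (mulQ : (R ⧸ I) → (R ⧸ I) → (R ⧸ I))
    (hmulQ : ∀ r s : R, mulQ (I.mkQ r) (I.mkQ s) = I.mkQ (r * s))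
    (D : (R ⧸ I) → Γ → (R ⧸ I))
    (hD : ∀ (r : R) (γ : Γ), D (I.mkQ r) γ = I.mkQ ((DirectSum.decompose 𝒜 r γ : 𝒜 γ) : R)) :
    ∃ e : (Γ →₀ (R ⧸ I)) ≃ₗ[k] ((Γ →₀ R) ⧸ smashIdeal Γ (k := k) I),
      (∀ f : Γ →₀ R,
        e (f.mapRange I.mkQ (map_zero _)) = Submodule.Quotient.mk f) ∧
      (∀ f g : Γ →₀ R,
        e (smashMulWith mulQ D (f.mapRange I.mkQ (map_zero _))
            (g.mapRange I.mkQ (map_zero _)))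
          = Submodule.Quotient.mk
              (smashMulWith (· * ·)
                (fun (s : R) (δ : Γ) => ((DirectSum.decompose 𝒜 s δ : 𝒜 δ) : R)) f g)) :=
  smash_product_of_quotient_iso_general 𝒜 I mulQ hmulQ D hD
end

section
/- Let Γ be an abelian group and R a unital Γ-graded ring. Then the following are equivalent: (1) every homogeneous left ideal of R is projective as a left R-module; (2) for every Γ-graded left R-module P that is projective as a left R-module, every homogeneous submodule of P is projective as a left R-module. -/
/-!
Let `P` be graded and projective. The free module on the homogeneous elements of `P`, graded
by their degrees, maps onto `P` by a graded map `π`, and a linear (not necessarily graded)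
section of `π` exhibits a homogeneous submodule `N ≤ P` as a direct summand of the homogeneous
submodule `π⁻¹ N`. So it suffices to show that homogeneous submodules `M` of graded free modules
`ι →₀ R` are projective. Well-order `ι`: the `i`-th coefficients of the elements of `M` supported
on `{j ≤ i}` form a homogeneous left ideal `I i`, projective by hypothesis, and lifting each
`I i` back into `M` gives `M ≃ ⨁ i, I i` (Kaplansky's argument).
-/

open DirectSum Finsupp

theorem Finsupp.support_max_lt {ι M : Type*} [LinearOrder ι] [Zero M] {x : ι →₀ M} {i : ι}
    (h : ∀ j ∈ x.support, j < i) : x.support.max < i :=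
  (Finset.sup_lt_iff (WithBot.bot_lt_coe i)).2 fun j hj => WithBot.coe_lt_coe.2 (h j hj)

theorem Submodule.projective_of_projective_comap {R F P : Type*} [Ring R] [AddCommGroup F]
    [Module R F] [AddCommGroup P] [Module R P] (π : F →ₗ[R] P) (s : P →ₗ[R] F)
    (hs : π ∘ₗ s = LinearMap.id) (N : Submodule R P) [Module.Projective R (N.comap π)] :
    Module.Projective R N :=
  .of_split (s.restrict fun p hp => show π (s p) ∈ N by rwa [← LinearMap.comp_apply, hs])
    (π.restrict (p := N.comap π) (q := N) fun _ hf => hf)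
    (LinearMap.ext fun p => Subtype.ext (LinearMap.congr_fun hs p))

namespace Submodule

variable {R : Type*} [Ring R] {ι : Type*} [LinearOrder ι]

noncomputable def leadingIdeal (M : Submodule R (ι →₀ R)) (i : ι) : Ideal R :=
  (M ⊓ supported R R (Set.Iic i)).map (lapply i)

theorem exists_section_leadingIdeal (M : Submodule R (ι →₀ R)) (i : ι)
    [Module.Projective R (M.leadingIdeal i)] :
    ∃ σ : M.leadingIdeal i →ₗ[R] M, ∀ a,
      (σ a : ι →₀ R) i = a ∧ (σ a : ι →₀ R) ∈ supported R R (Set.Iic i) := by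
  let τ : ↥(M ⊓ supported R R (Set.Iic i)) →ₗ[R] M.leadingIdeal i :=
    (lapply i).restrict fun f hf => mem_map_of_mem hf
  have hτ : Function.Surjective τ := by
    rintro ⟨_, f, hf, rfl⟩
    exact ⟨⟨f, hf⟩, rfl⟩
  obtain ⟨σ, hσ⟩ := Module.projective_lifting_property τ LinearMap.id hτ
  refine ⟨(inclusion inf_le_left).comp σ, fun a => ⟨?_, (σ a).2.2⟩⟩
  exact congrArg Subtype.val (LinearMap.congr_fun hσ a)

variable {M : Submodule R (ι →₀ R)} (σ : ∀ i, M.leadingIdeal i →ₗ[R] M)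

theorem injective_toModule_of_leadingIdeal
    (hσ : ∀ i a, (σ i a : ι →₀ R) i = a)
    (hσ_supp : ∀ i a, (σ i a : ι →₀ R) ∈ supported R R (Set.Iic i)) :
    Function.Injective (toModule R ι M σ) := by
  classical
  rw [injective_iff_map_eq_zero]
  intro z hz
  by_contra hz0
  have hne : z.support.Nonempty :=
    Finset.nonempty_iff_ne_empty.2 fun h => hz0 (DFinsupp.support_eq_empty.1 h)
  set i := z.support.max' hne
  have hsum : (toModule R ι M σ z : ι →₀ R) i = z i := by
    conv_lhs => rw [← DirectSum.sum_support_of z]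
    rw [map_sum, coe_sum, Finsupp.finsetSum_apply,
      Finset.sum_eq_single_of_mem i (z.support.max'_mem hne)]
    · rw [← lof_eq_of R, toModule_lof, hσ]
    · intro j hj hji
      rw [← lof_eq_of R, toModule_lof]
      exact Finsupp.notMem_support_iff.1 fun hi =>
        hji (le_antisymm (Finset.le_max' _ j hj) (hσ_supp j (z j) hi))
  rw [hz] at hsum
  exact DFinsupp.mem_support_iff.1 (z.support.max'_mem hne) (Subtype.ext hsum.symm)

theorem surjective_toModule_of_leadingIdeal [WellFoundedLT ι]
    (hσ : ∀ i a, (σ i a : ι →₀ R) i = a)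
    (hσ_supp : ∀ i a, (σ i a : ι →₀ R) ∈ supported R R (Set.Iic i)) :
    Function.Surjective (toModule R ι M σ) := by
  suffices h : ∀ x ∈ M, x ∈ (LinearMap.range (toModule R ι M σ)).map M.subtype by
    rintro ⟨x, hx⟩
    obtain ⟨_, ⟨z, rfl⟩, hz⟩ := h x hx
    exact ⟨z, Subtype.ext hz⟩
  intro x
  induction x using (wellFounded_lt.onFun (f := fun x : ι →₀ R => x.support.max)).induction with
  | _ x ih =>
  intro hx
  rcases x.support.eq_empty_or_nonempty with h0 | hne
  · rw [Finsupp.support_eq_empty.1 h0]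
    exact zero_mem _
  set i := x.support.max' hne
  have hxi : x i ∈ M.leadingIdeal i :=
    ⟨x, ⟨hx, fun j hj => Finset.le_max' _ j hj⟩, rfl⟩
  let g := σ i ⟨x i, hxi⟩
  have hg : (g : ι →₀ R) ∈ (LinearMap.range (toModule R ι M σ)).map M.subtype :=
    ⟨g, ⟨lof R ι _ i ⟨x i, hxi⟩, toModule_lof R _ _⟩, rfl⟩
  have hlt : (x - g).support.max < x.support.max := by
    rw [← Finset.coe_max' hne]
    refine Finsupp.support_max_lt fun j hj => lt_of_le_of_ne ?_ ?_
    · rcases Finset.mem_union.1 (Finsupp.support_sub hj) with h | h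
      · exact Finset.le_max' _ j h
      · exact hσ_supp i _ h
    · rintro rfl
      exact Finsupp.mem_support_iff.1 hj (by rw [Finsupp.sub_apply, hσ, sub_self])
  simpa only [sub_add_cancel] using add_mem (ih _ hlt (sub_mem hx g.2)) hg

theorem projective_of_projective_leadingIdeal [WellFoundedLT ι]
    (M : Submodule R (ι →₀ R)) [∀ i, Module.Projective R (M.leadingIdeal i)] :
    Module.Projective R M := by
  choose σ hσ hσ_supp using fun i => M.exists_section_leadingIdeal i
  have : Module.Projective R (⨁ i, M.leadingIdeal i) :=
    inferInstanceAs (Module.Projective R (Π₀ i, M.leadingIdeal i))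
  exact .of_equiv <| LinearEquiv.ofBijective (toModule R ι M σ)
    ⟨injective_toModule_of_leadingIdeal σ hσ hσ_supp,
      surjective_toModule_of_leadingIdeal σ hσ hσ_supp⟩

end Submodule

section FreeComponent

variable {Γ : Type*} [AddCommGroup Γ] [DecidableEq Γ] {R : Type*} [Ring R]
  (𝒜 : Γ → AddSubgroup R) [Decomposition 𝒜] {ι : Type*} (d : ι → Γ)

/-- The degree-`γ` component for the grading of `ι →₀ R` in which `single i 1` has degree `d i`. -/
noncomputable def Finsupp.gradedComponent (γ : Γ) : (ι →₀ R) →+ (ι →₀ R) where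
  toFun f := onFinset f.support (fun i => (decompose 𝒜 (f i) (γ - d i) : R)) fun _ h =>
    mem_support_iff.2 fun hf => h (by simp [hf])
  map_zero' := by ext; simp
  map_add' f g := by ext; simp

theorem Finsupp.gradedComponent_apply (γ : Γ) (f : ι →₀ R) (i : ι) :
    gradedComponent 𝒜 d γ f i = decompose 𝒜 (f i) (γ - d i) := rfl

theorem Finsupp.support_gradedComponent_subset (γ : Γ) (f : ι →₀ R) :
    (gradedComponent 𝒜 d γ f).support ⊆ f.support := by
  intro i hi
  rw [mem_support_iff] at hi ⊢
  contrapose hi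
  simp [gradedComponent_apply, hi]

theorem Finsupp.gradedComponent_single (γ : Γ) (i : ι) (r : R) :
    gradedComponent 𝒜 d γ (single i r) = single i (decompose 𝒜 r (γ - d i) : R) := by
  ext j
  rw [gradedComponent_apply]
  by_cases h : i = j
  · subst h; simp
  · simp [single_eq_of_ne' h]

theorem Submodule.decompose_mem_leadingIdeal [LinearOrder ι] {M : Submodule R (ι →₀ R)}
    (hM : ∀ f ∈ M, ∀ γ, gradedComponent 𝒜 d γ f ∈ M) {i : ι} {x : R}
    (hx : x ∈ M.leadingIdeal i) (γ : Γ) : (decompose 𝒜 x γ : R) ∈ M.leadingIdeal i := by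
  obtain ⟨f, ⟨hfM, hf⟩, rfl⟩ := hx
  refine ⟨gradedComponent 𝒜 d (γ + d i) f, ⟨hM f hfM _, ?_⟩, ?_⟩
  · exact fun j hj => hf (support_gradedComponent_subset 𝒜 d _ f hj)
  · rw [lapply_apply, gradedComponent_apply, add_sub_cancel_right]
    rfl

theorem Submodule.projective_of_gradedComponent_mem
    (h𝒜 : ∀ I : Ideal R, (∀ x ∈ I, ∀ γ, (decompose 𝒜 x γ : R) ∈ I) → Module.Projective R I)
    (M : Submodule R (ι →₀ R)) (hM : ∀ f ∈ M, ∀ γ, gradedComponent 𝒜 d γ f ∈ M) :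
    Module.Projective R M := by
  obtain ⟨_, _⟩ := exists_wellFoundedLT ι
  have := fun i => h𝒜 _ fun _ hx => decompose_mem_leadingIdeal 𝒜 d hM (i := i) hx
  exact M.projective_of_projective_leadingIdeal

end FreeComponent

theorem linearCombination_homogeneous_surjective {Γ R P : Type*} [DecidableEq Γ] [Semiring R]
    [AddCommGroup P] [Module R P] (ℳ : Γ → AddSubgroup P) [Decomposition ℳ] :
    Function.Surjective (linearCombination R fun i : Σ γ, ℳ γ => (i.2 : P)) := by
  classical
  rw [← LinearMap.range_eq_top, range_linearCombination, eq_top_iff]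
  intro p _
  rw [← sum_support_decompose ℳ p]
  exact sum_mem fun γ _ => Submodule.subset_span ⟨⟨γ, decompose ℳ p γ⟩, rfl⟩

section GradedModule

variable {Γ : Type*} [AddCommGroup Γ] [DecidableEq Γ] {R : Type*} [Ring R]
  (𝒜 : Γ → AddSubgroup R) [Decomposition 𝒜]
  {P : Type*} [AddCommGroup P] [Module R P] (ℳ : Γ → AddSubgroup P) [Decomposition ℳ]

theorem decompose_smul_of_mem (hsm : ∀ γ δ, ∀ r ∈ 𝒜 γ, ∀ p ∈ ℳ δ, r • p ∈ ℳ (γ + δ))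
    {p : P} {δ : Γ} (hp : p ∈ ℳ δ) (r : R) (γ : Γ) :
    (decompose ℳ (r • p) γ : P) = (decompose 𝒜 r (γ - δ) : R) • p := by
  induction r using Decomposition.inductionOn 𝒜 with
  | zero => simp
  | @homogeneous β r =>
    by_cases hγ : γ = β + δ
    · subst hγ
      rw [decompose_of_mem_same ℳ (hsm β δ r r.2 p hp), add_sub_cancel_right,
        decompose_of_mem_same 𝒜 r.2]
    · rw [decompose_of_mem_ne ℳ (hsm β δ r r.2 p hp) (Ne.symm hγ),
        decompose_of_mem_ne 𝒜 r.2 fun h => hγ (eq_add_of_sub_eq h.symm), zero_smul]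
  | add a b ha hb =>
    rw [add_smul, decompose_add, DirectSum.add_apply, AddSubgroup.coe_add, ha, hb, decompose_add,
      DirectSum.add_apply, AddSubgroup.coe_add, add_smul]

theorem linearCombination_gradedComponent
    (hsm : ∀ γ δ, ∀ r ∈ 𝒜 γ, ∀ p ∈ ℳ δ, r • p ∈ ℳ (γ + δ)) {ι : Type*} (d : ι → Γ)
    {v : ι → P} (hv : ∀ i, v i ∈ ℳ (d i)) (γ : Γ) (f : ι →₀ R) :
    linearCombination R v (gradedComponent 𝒜 d γ f) = decompose ℳ (linearCombination R v f) γ := by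
  induction f using Finsupp.induction_linear with
  | zero => simp
  | add f g hf hg =>
    rw [map_add, map_add, hf, hg, map_add, decompose_add, DirectSum.add_apply, AddSubgroup.coe_add]
  | single i r =>
    rw [gradedComponent_single, linearCombination_single, linearCombination_single,
      decompose_smul_of_mem 𝒜 ℳ hsm (hv i)]

end GradedModule

/-- For a unital `Γ`-graded ring `R` (`Γ` an abelian group) the following are equivalent:
(1) every homogeneous left ideal of `R` is projective as a left `R`-module;
(2) for every `Γ`-graded left `R`-module `P` that is projective as a left `R`-module,
every homogeneous submodule of `P` is projective as a left `R`-module.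
(A submodule is homogeneous when it contains all homogeneous components of each of
its elements.) -/
theorem graded_hereditary_iff {Γ : Type w} [AddCommGroup Γ] [DecidableEq Γ]
    {R : Type u} [Ring R] (𝒜 : Γ → AddSubgroup R) [GradedRing 𝒜] :
    (∀ I : Ideal R,
        (∀ x ∈ I, ∀ γ : Γ, ((DirectSum.decompose 𝒜 x γ : 𝒜 γ) : R) ∈ I) →
        Module.Projective R I) ↔
    (∀ (P : Type u) [AddCommGroup P] [Module R P] (ℳ : Γ → AddSubgroup P)
        [DirectSum.Decomposition ℳ],
        (∀ (γ δ : Γ), ∀ r ∈ 𝒜 γ, ∀ p ∈ ℳ δ, r • p ∈ ℳ (γ + δ)) →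
        Module.Projective R P →
        ∀ N : Submodule R P,
          (∀ x ∈ N, ∀ γ : Γ, ((DirectSum.decompose ℳ x γ : ℳ γ) : P) ∈ N) →
          Module.Projective R N) := by
  refine ⟨fun h𝒜 P _ _ ℳ _ hsm _ N hN => ?_, fun h I hI => ?_⟩
  · let π := linearCombination R fun i : Σ γ, ℳ γ => (i.2 : P)
    obtain ⟨s, hs⟩ := Module.projective_lifting_property π LinearMap.id
      (linearCombination_homogeneous_surjective ℳ)
    have : Module.Projective R (N.comap π) :=
      (N.comap π).projective_of_gradedComponent_mem 𝒜 Sigma.fst h𝒜 fun f hf γ => by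
        rw [Submodule.mem_comap,
          linearCombination_gradedComponent 𝒜 ℳ hsm Sigma.fst fun i => i.2.2]
        exact hN _ hf γ
    exact N.projective_of_projective_comap π s hs
  · exact h R 𝒜 (fun γ δ r hr p hp => SetLike.mul_mem_graded hr hp) inferInstance I hI
end

section
/- Let Γ be an abelian group and M a Γ-monoid with an order unit i. Then the following are equivalent: (1) i is a strong order unit; (2) for every γ ∈ Γ, i ≍ ^γ i; (3) the ≍-equivalence class of i, which is a subsemigroup of M, is closed under the action of Γ (i.e., is a Γ-subsemigroup of M). Moreover: (4) if M has a strong order unit, then the set of all strong order units of M is exactly one equivalence class under ≍. -/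
/-- An action of an additive abelian group `Γ` on an additive commutative monoid `M`
by monoid automorphisms; this makes `M` a `Γ`-monoid. -/
structure GammaAction (Γ M : Type*) [AddCommGroup Γ] [AddCommMonoid M] where
  act : Γ → M → M
  act_zero : ∀ m, act 0 m = m
  act_add : ∀ γ δ m, act (γ + δ) m = act γ (act δ m)
  act_map_add : ∀ γ m n, act γ (m + n) = act γ m + act γ n
  act_map_zero : ∀ γ, act γ 0 = 0

variable {Γ M : Type*} [AddCommGroup Γ] [AddCommMonoid M]

/-- The natural preorder on a commutative monoid: `n ≤ m` iff `n + p = m` for some `p`. -/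
def Mle (n m : M) : Prop := ∃ p, n + p = m

/-- `n ∝ m` iff `n ≤ k • m` for some positive integer `k`. -/
def Propto (n m : M) : Prop := ∃ k : ℕ, 0 < k ∧ Mle n (k • m)

/-- `n ≍ m` iff `n ∝ m` and `m ∝ n`. -/
def Asymp (n m : M) : Prop := Propto n m ∧ Propto m n

/-- `i` is an order unit of the `Γ`-monoid `M`: every `m` satisfies
`m ≤ ∑_{k} {}^{γ_k} i` for some finite family `γ_1, …, γ_t` in `Γ`. -/
def IsOrderUnit (ρ : GammaAction Γ M) (i : M) : Prop :=
  ∀ m : M, ∃ (t : ℕ) (γ : Fin t → Γ), Mle m (∑ k, ρ.act (γ k) i)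

/-- `i` is a strong order unit: an order unit such that every `m` satisfies `m ≤ k • i`
for some positive integer `k`. -/
def IsStrongOrderUnit (ρ : GammaAction Γ M) (i : M) : Prop :=
  IsOrderUnit ρ i ∧ ∀ m : M, ∃ k : ℕ, 0 < k ∧ Mle m (k • i)

lemma Mle.trans' {a b c : M} (h1 : Mle a b) (h2 : Mle b c) : Mle a c := by
  obtain ⟨p, hp⟩ := h1; obtain ⟨q, hq⟩ := h2
  exact ⟨p + q, by rw [← add_assoc, hp, hq]⟩

lemma Mle.add' {a b c d : M} (h1 : Mle a b) (h2 : Mle c d) : Mle (a + c) (b + d) := by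
  obtain ⟨p, hp⟩ := h1; obtain ⟨q, hq⟩ := h2
  exact ⟨p + q, by rw [← hp, ← hq]; abel⟩

lemma Mle.smul' (k : ℕ) {a b : M} (h : Mle a b) : Mle (k • a) (k • b) := by
  obtain ⟨p, hp⟩ := h
  exact ⟨k • p, by rw [← smul_add, hp]⟩

lemma act_mle (ρ : GammaAction Γ M) (γ : Γ) {a b : M} (h : Mle a b) :
    Mle (ρ.act γ a) (ρ.act γ b) := by
  obtain ⟨p, hp⟩ := h
  exact ⟨ρ.act γ p, by rw [← ρ.act_map_add, hp]⟩

lemma act_smul (ρ : GammaAction Γ M) (γ : Γ) (k : ℕ) (m : M) :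
    ρ.act γ (k • m) = k • ρ.act γ m := by
  induction k with
  | zero => simpa using ρ.act_map_zero γ
  | succ n ih => rw [succ_nsmul, succ_nsmul, ρ.act_map_add, ih]

lemma Propto.trans' {a b c : M} (h1 : Propto a b) (h2 : Propto b c) : Propto a c := by
  obtain ⟨k, hk, hab⟩ := h1; obtain ⟨l, hl, hbc⟩ := h2
  exact ⟨k * l, Nat.mul_pos hk hl, hab.trans' (by rw [mul_smul]; exact hbc.smul' k)⟩

lemma Propto.add' {a b c : M} (h1 : Propto a c) (h2 : Propto b c) : Propto (a + b) c := by
  obtain ⟨k, hk, hac⟩ := h1; obtain ⟨l, hl, hbc⟩ := h2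
  exact ⟨k + l, Nat.add_pos_left hk l, by rw [add_nsmul]; exact hac.add' hbc⟩

lemma propto_self (a : M) : Propto a a := ⟨1, one_pos, 0, by simp⟩

lemma propto_sum {t : ℕ} (f : Fin t → M) {c : M} (h : ∀ k, Propto (f k) c) :
    Propto (∑ k, f k) c := by
  induction t with
  | zero => exact ⟨1, one_pos, ⟨1 • c, by simp⟩⟩
  | succ n ih =>
      rw [Fin.sum_univ_succ]
      exact (h 0).add' (ih _ fun k => h k.succ)

lemma act_propto (ρ : GammaAction Γ M) (γ : Γ) {a b : M} (h : Propto a b) :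
    Propto (ρ.act γ a) (ρ.act γ b) := by
  obtain ⟨k, hk, hab⟩ := h
  exact ⟨k, hk, by rw [← act_smul]; exact act_mle ρ γ hab⟩

/-- Let `M` be a `Γ`-monoid and `i ∈ M` an order unit.  Then the following are equivalent:
(1) `i` is a strong order unit; (2) `i ≍ {}^γ i` for every `γ`; (3) the `≍`-equivalence class
of `i` is closed under the action of `Γ`.  Moreover (4): if `M` has a strong order unit, then
the strong order units form exactly one `≍`-equivalence class. -/
theorem strong_order_unit_tfae (ρ : GammaAction Γ M) (i : M) (hi : IsOrderUnit ρ i) :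
    ((∀ m : M, ∃ k : ℕ, 0 < k ∧ Mle m (k • i)) ↔ ∀ γ : Γ, Asymp i (ρ.act γ i)) ∧
    ((∀ m : M, ∃ k : ℕ, 0 < k ∧ Mle m (k • i)) ↔
      ∀ x : M, Asymp x i → ∀ γ : Γ, Asymp (ρ.act γ x) i) ∧
    ((∀ m : M, ∃ k : ℕ, 0 < k ∧ Mle m (k • i)) →
      ∀ x : M, IsStrongOrderUnit ρ x ↔ Asymp x i) := by
  -- (1) → (2)
  have h12 : (∀ m : M, ∃ k : ℕ, 0 < k ∧ Mle m (k • i)) → ∀ γ : Γ, Asymp i (ρ.act γ i) := by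
    intro hs γ
    constructor
    · -- i ∝ ρ.act γ i
      obtain ⟨k, hk, hle⟩ := hs (ρ.act (-γ) i)
      refine ⟨k, hk, ?_⟩
      have := act_mle ρ γ hle
      rwa [← ρ.act_add, add_neg_cancel, ρ.act_zero, act_smul] at this
    · exact hs (ρ.act γ i)
  -- (2) → (1)
  have h21 : (∀ γ : Γ, Asymp i (ρ.act γ i)) → ∀ m : M, ∃ k : ℕ, 0 < k ∧ Mle m (k • i) := by
    intro h2 m
    obtain ⟨t, γ, hle⟩ := hi m
    have hsum : Propto (∑ k, ρ.act (γ k) i) i := propto_sum _ fun k => (h2 (γ k)).2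
    obtain ⟨k, hk, hki⟩ := hsum
    exact ⟨k, hk, hle.trans' hki⟩
  have first : (∀ m : M, ∃ k : ℕ, 0 < k ∧ Mle m (k • i)) ↔ ∀ γ : Γ, Asymp i (ρ.act γ i) :=
    ⟨h12, h21⟩
  refine ⟨first, ?_, ?_⟩
  · constructor
    · -- (1) → (3)
      intro hs x hx γ
      have h2 := h12 hs
      constructor
      · -- ρ.act γ x ∝ i
        exact (act_propto ρ γ hx.1).trans' ((h2 γ).2)
      · -- i ∝ ρ.act γ x
        exact ((h2 γ).1).trans' (act_propto ρ γ hx.2)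
    · -- (3) → (1)
      intro h3
      apply h21
      intro γ
      have := h3 i ⟨propto_self i, propto_self i⟩ γ
      exact ⟨this.2, this.1⟩
  · -- (4)
    intro hs x
    constructor
    · rintro ⟨_, hxstrong⟩
      obtain ⟨k, hk, hik⟩ := hxstrong i
      obtain ⟨l, hl, hxi⟩ := hs x
      exact ⟨⟨l, hl, hxi⟩, ⟨k, hk, hik⟩⟩
    · rintro ⟨⟨k, hk, hxi⟩, ⟨l, hl, hix⟩⟩
      constructor
      · -- x is an order unit
        intro m
        obtain ⟨n, hn, hm⟩ := hs m
        refine ⟨n * l, fun _ => 0, ?_⟩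
        have : (∑ _j : Fin (n * l), ρ.act 0 x) = (n * l) • x := by
          simp [ρ.act_zero]
        rw [this, mul_smul]
        exact hm.trans' (hix.smul' n)
      · -- strong property for x
        intro m
        obtain ⟨n, hn, hm⟩ := hs m
        exact ⟨n * l, Nat.mul_pos hn hl,
          hm.trans' (by rw [mul_smul]; exact hix.smul' n)⟩
end

section
/- Let k be a field, T a finite set, and R = ∏_{t∈T} k. For t ∈ T let ε_t ∈ R be the element whose t-component is 1 and whose other components are 0. Then every idempotent matrix μ ∈ M_m(R) is equivalent to a matrix of the form diag(ε_{t_1}, …, ε_{t_n}): there exist n ∈ ℕ, elements t_1, …, t_n ∈ T, and matrices a ∈ M_{m×n}(R), b ∈ M_{n×m}(R) such that a·b = μ and b·a = diag(ε_{t_1}, …, ε_{t_n}). -/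
/-!
Since `R = ∏ₜ k` is a product of fields, an idempotent `μ` over `R` is a family of idempotents
`μₜ` over `k`. Over a field, an idempotent `e` factors through its range: with a basis of the
range, `e = aₜ bₜ` and `bₜ aₜ = 1`. Placing the columns of `aₜ` and the rows of `bₜ` into the
`t`-th coordinate of `R` and juxtaposing them over all `t` gives `a`, `b` with `a b = μ`, while
`b a` is block diagonal with identity blocks in coordinate `t`, i.e. `diag(ε_{t₁}, …, ε_{tₙ})`.
-/

open Matrix

theorem Matrix.exists_mul_eq_and_mul_eq_one_of_isIdempotentElem {k ι : Type*} [Field k]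
    [Fintype ι] [DecidableEq ι] {e : Matrix ι ι k} (he : IsIdempotentElem e) :
    ∃ (r : ℕ) (a : Matrix ι (Fin r) k) (b : Matrix (Fin r) ι k), a * b = e ∧ b * a = 1 := by
  set V := LinearMap.range (toLin' e)
  have hproj : LinearMap.IsProj V (toLin' e) :=
    LinearMap.IsIdempotentElem.isProj_range _ (he.map toLinAlgEquiv')
  let B := Module.finBasis k V
  refine ⟨_, LinearMap.toMatrix B (Pi.basisFun k ι) V.subtype,
    LinearMap.toMatrix (Pi.basisFun k ι) B hproj.codRestrict, ?_, ?_⟩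
  · rw [← LinearMap.toMatrix_comp, hproj.subtype_comp_codRestrict, LinearMap.toMatrix_eq_toMatrix',
      LinearMap.toMatrix'_toLin']
  · have : hproj.codRestrict ∘ₗ V.subtype = LinearMap.id := LinearMap.ext hproj.codRestrict_apply_cod
    rw [← LinearMap.toMatrix_comp, this, LinearMap.toMatrix_id]

namespace Matrix

variable {T ι : Type*} [DecidableEq T] {R : T → Type*} [∀ t, Semiring (R t)] {r : T → Type*}

/-- Column `⟨t, j⟩` is column `j` of `a t`, placed in the `t`-th coordinate of `∀ t, R t`. -/
def piSingleCols (a : ∀ t, Matrix ι (r t) (R t)) : Matrix ι (Σ t, r t) (∀ t, R t) :=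
  of fun i p => Pi.single p.1 (a p.1 i p.2)

def piSingleRows (b : ∀ t, Matrix (r t) ι (R t)) : Matrix (Σ t, r t) ι (∀ t, R t) :=
  of fun p j => Pi.single p.1 (b p.1 p.2 j)

@[simp]
theorem piSingleCols_apply (a : ∀ t, Matrix ι (r t) (R t)) (i : ι) (p : Σ t, r t) :
    piSingleCols a i p = Pi.single p.1 (a p.1 i p.2) := rfl

@[simp]
theorem piSingleRows_apply (b : ∀ t, Matrix (r t) ι (R t)) (p : Σ t, r t) (j : ι) :
    piSingleRows b p j = Pi.single p.1 (b p.1 p.2 j) := rfl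

theorem piSingleCols_mul_piSingleRows [Fintype T] [∀ t, Fintype (r t)]
    (a : ∀ t, Matrix ι (r t) (R t)) (b : ∀ t, Matrix (r t) ι (R t)) :
    piSingleCols a * piSingleRows b = of fun i j t => (a t * b t) i j := by
  ext i j t
  simp only [piSingleCols_apply, piSingleRows_apply, mul_apply, of_apply, Fintype.sum_sigma,
    Finset.sum_apply, ← Pi.single_mul]
  rw [Fintype.sum_eq_single t fun s hs => by simp [Pi.single_eq_of_ne' hs]]
  simp

theorem piSingleRows_mul_piSingleCols [Fintype ι] (a : ∀ t, Matrix ι (r t) (R t))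
    (b : ∀ t, Matrix (r t) ι (R t)) :
    piSingleRows b * piSingleCols a = blockDiagonal' fun t => (b t * a t).map (Pi.single t) := by
  ext ⟨t, i⟩ ⟨t', j⟩ : 1
  obtain rfl | htt' := eq_or_ne t t'
  · simp only [piSingleCols_apply, piSingleRows_apply, mul_apply, ← Pi.single_mul,
      blockDiagonal'_apply_eq, map_apply]
    exact (map_sum (AddMonoidHom.single R t) _ _).symm
  · rw [blockDiagonal'_apply_ne _ _ _ htt', mul_apply]
    refine Finset.sum_eq_zero fun x _ => ?_
    rw [piSingleRows_apply, piSingleCols_apply, ← Pi.single_mul_left, Pi.single_eq_of_ne htt',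
      mul_zero, Pi.single_zero]

end Matrix

/-- Let `k` be a field, `T` a finite set and `R = ∏_{t ∈ T} k`.  For `t ∈ T` let
`ε_t ∈ R` be the element with `t`-component `1` and all other components `0`.  Then every
idempotent matrix `μ ∈ M_m(R)` is equivalent to a diagonal matrix
`diag(ε_{t_1}, …, ε_{t_n})`: there are `n ∈ ℕ`, `t_1, …, t_n ∈ T` and matrices
`a ∈ M_{m×n}(R)`, `b ∈ M_{n×m}(R)` with `a·b = μ` and `b·a = diag(ε_{t_1}, …, ε_{t_n})`. -/
theorem idempotent_matrix_equiv_diagonal {k : Type*} [Field k]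
    {T : Type*} [Fintype T] [DecidableEq T]
    {m : ℕ} (μ : Matrix (Fin m) (Fin m) (T → k)) (hμ : μ * μ = μ) :
    ∃ (n : ℕ) (ts : Fin n → T) (a : Matrix (Fin m) (Fin n) (T → k))
      (b : Matrix (Fin n) (Fin m) (T → k)),
      a * b = μ ∧ b * a = Matrix.diagonal fun i => Pi.single (ts i) (1 : k) := by
  choose r a b hab hba using fun t : T => exists_mul_eq_and_mul_eq_one_of_isIdempotentElem
    (IsIdempotentElem.map (e := μ) hμ (Pi.evalRingHom (fun _ => k) t).mapMatrix)
  let e := Fintype.equivFin (Σ t, Fin (r t))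
  refine ⟨_, fun q => (e.symm q).1, (piSingleCols a).submatrix id e.symm,
    (piSingleRows b).submatrix e.symm id, ?_, ?_⟩
  · rw [submatrix_mul_equiv _ _ _ e.symm, submatrix_id_id, piSingleCols_mul_piSingleRows]
    ext i j t
    simp [hab]
  · rw [← submatrix_mul _ _ _ _ _ Function.bijective_id, piSingleRows_mul_piSingleCols]
    simp only [hba, ← diagonal_one, diagonal_map, Pi.single_zero, blockDiagonal'_diagonal,
      submatrix_diagonal_equiv]
    rfl
end

section
/- In the Laurent polynomial ring ℤ[x, x⁻¹], the ideal generated by the two elements 2 and x − 1 is not projective as a ℤ[x, x⁻¹]-module. In particular, ℤ[x, x⁻¹] is not a hereditary ring. -/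
/-!
A splitting of the cover `R² → (2, T - 1)`, `(x, y) ↦ 2x + (T - 1)y`, sends `2` to some `(u, v)`
with `2u + (T - 1)v = 2`, and, by linearity applied to `(T - 1)·2 = 2·(T - 1)`, with
`(T - 1)u ∈ (2)`. Evaluating the first relation at `T = 1` gives `u(1) = 1`; reducing the second
modulo `2` gives `(T - 1)ū = 0` in the domain `𝔽₂[T;T⁻¹]`, so `ū = 0` and `u(1)` is even.
-/

open LaurentPolynomial

section SpanPair

variable {R : Type*} [CommRing R]

def Ideal.spanPairCover (a b : R) : R × R →ₗ[R] Ideal.span {a, b} :=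
  ((LinearMap.mulRight R a).coprod (LinearMap.mulRight R b)).codRestrict _
    fun p => Ideal.mem_span_pair.mpr ⟨p.1, p.2, rfl⟩

@[simp]
lemma Ideal.spanPairCover_apply (a b : R) (p : R × R) :
    (Ideal.spanPairCover a b p : R) = p.1 * a + p.2 * b := rfl

lemma Ideal.spanPairCover_surjective (a b : R) :
    Function.Surjective (Ideal.spanPairCover a b) := by
  rintro ⟨z, hz⟩
  obtain ⟨x, y, rfl⟩ := Ideal.mem_span_pair.mp hz
  exact ⟨(x, y), rfl⟩

lemma Ideal.exists_of_projective_span_pair (a b : R) [Module.Projective R (Ideal.span {a, b})] :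
    ∃ u v w : R, u * a + v * b = a ∧ b * u = a * w := by
  obtain ⟨σ, hσ⟩ := Module.projective_lifting_property (Ideal.spanPairCover a b) LinearMap.id
    (Ideal.spanPairCover_surjective a b)
  have ha : a ∈ Ideal.span {a, b} := Ideal.subset_span (by simp)
  have hb : b ∈ Ideal.span {a, b} := Ideal.subset_span (by simp)
  have hcomm : b • (⟨a, ha⟩ : Ideal.span {a, b}) = a • ⟨b, hb⟩ := Subtype.ext (mul_comm b a)
  have hσcomm : b • σ ⟨a, ha⟩ = a • σ ⟨b, hb⟩ := by rw [← map_smul, hcomm, map_smul]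
  refine ⟨(σ ⟨a, ha⟩).1, (σ ⟨a, ha⟩).2, (σ ⟨b, hb⟩).1, ?_, ?_⟩
  · simpa using congrArg Subtype.val (LinearMap.congr_fun hσ ⟨a, ha⟩)
  · simpa using congrArg Prod.fst hσcomm

end SpanPair

namespace LaurentPolynomial

variable {R S : Type*} [CommSemiring R] [CommSemiring S]

lemma ringHom_ext {P : Type*} [Semiring P] {f g : R[T;T⁻¹] →+* P}
    (hC : ∀ r, f (C r) = g (C r)) (hT : f (T 1) = g (T 1)) : f = g := by
  refine IsLocalization.ringHom_ext (Submonoid.powers (Polynomial.X : Polynomial R)) ?_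
  refine Polynomial.ringHom_ext (fun r => ?_) ?_
  · simpa [algebraMap_eq_toLaurent] using hC r
  · simpa [algebraMap_eq_toLaurent] using hT

noncomputable def evalOne (R : Type*) [CommSemiring R] : R[T;T⁻¹] →+* R :=
  eval₂ (RingHom.id R) 1

@[simp]
lemma evalOne_C (r : R) : evalOne R (C r) = r := by simp [evalOne]

@[simp]
lemma evalOne_T (n : ℤ) : evalOne R (T n) = 1 := by simp [evalOne]

noncomputable def mapRingHom (f : R →+* S) : R[T;T⁻¹] →+* S[T;T⁻¹] :=
  eval₂ (C.comp f) (isUnit_T 1).unit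

@[simp]
lemma mapRingHom_C (f : R →+* S) (r : R) : mapRingHom f (C r) = C (f r) := by
  simp [mapRingHom]

@[simp]
lemma mapRingHom_T_one (f : R →+* S) : mapRingHom f (T 1) = T 1 := by
  simp [mapRingHom]

lemma evalOne_mapRingHom (f : R →+* S) (p : R[T;T⁻¹]) :
    evalOne S (mapRingHom f p) = f (evalOne R p) :=
  RingHom.congr_fun
    (ringHom_ext (f := (evalOne S).comp (mapRingHom f)) (g := f.comp (evalOne R))
      (by simp) (by simp)) p

lemma T_one_sub_one_ne_zero {K : Type*} [Ring K] [Nontrivial K] :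
    (T 1 - 1 : K[T;T⁻¹]) ≠ 0 := by
  rw [sub_ne_zero, ← T_zero]
  exact fun h => one_ne_zero (AddMonoidAlgebra.single_left_injective (one_ne_zero (α := K)) h)

lemma dvd_evalOne_of_T_one_sub_one_mul_eq {p : ℕ} [Fact p.Prime] {u w : ℤ[T;T⁻¹]}
    (h : (T 1 - 1) * u = (p : ℤ[T;T⁻¹]) * w) : (p : ℤ) ∣ evalOne ℤ u := by
  set π := mapRingHom (Int.castRingHom (ZMod p))
  have hu : π u = 0 := by
    have hp : (p : (ZMod p)[T;T⁻¹]) = 0 := by rw [← map_natCast C, ZMod.natCast_self, map_zero]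
    have hπ := congrArg π h
    rw [map_mul, map_mul, map_sub, map_one, mapRingHom_T_one, map_natCast, hp, zero_mul] at hπ
    exact (mul_eq_zero.mp hπ).resolve_left T_one_sub_one_ne_zero
  rw [← ZMod.intCast_zmod_eq_zero_iff_dvd, ← eq_intCast (Int.castRingHom (ZMod p)),
    ← evalOne_mapRingHom, hu, map_zero]

end LaurentPolynomial

/-- In the Laurent polynomial ring `ℤ[x, x⁻¹]`, the ideal generated by `2` and `x − 1`
is not projective as a `ℤ[x, x⁻¹]`-module; in particular `ℤ[x, x⁻¹]` is not a
hereditary ring (not every ideal is projective). -/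
theorem laurent_ideal_two_X_sub_one_not_projective :
    ¬ Module.Projective (LaurentPolynomial ℤ)
        (Ideal.span {(2 : LaurentPolynomial ℤ), T 1 - 1}) ∧
    ¬ ∀ I : Ideal (LaurentPolynomial ℤ), Module.Projective (LaurentPolynomial ℤ) I := by
  have not_projective : ¬ Module.Projective (LaurentPolynomial ℤ)
      (Ideal.span {(2 : LaurentPolynomial ℤ), T 1 - 1}) := by
    intro
    obtain ⟨u, v, w, hu, hw⟩ := Ideal.exists_of_projective_span_pair (2 : ℤ[T;T⁻¹]) (T 1 - 1)
    have hε : evalOne ℤ u = 1 := by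
      have := congrArg (evalOne ℤ) hu
      simp only [map_add, map_mul, map_sub, map_one, map_ofNat, evalOne_T] at this
      omega
    have h2 := dvd_evalOne_of_T_one_sub_one_mul_eq (p := 2) (by exact_mod_cast hw)
    rw [hε] at h2
    norm_num at h2
  exact ⟨not_projective, fun h => not_projective (h _)⟩
end

section
/- Let k be an integral domain and let e ∈ M_2(k) be the matrix having 1 at position (1,1) and 0 elsewhere. Let S be the quotient of the free k-algebra on eight generators h_{ij}, h*_{ij} (1 ≤ i, j ≤ 2) by the two-sided ideal generated by the entries of the 2×2 matrix identities h·h* = e and h*·h = e, where h = (h_{ij}) and h* = (h*_{ij}). Then in S the following hold: h_{11}·h*_{11} = 1, h_{12}·h*_{21} = 0, the elements h_{22} and h*_{22} are nonzero, and S has zero divisors, i.e., there exist nonzero a, b ∈ S with a·b = 0. In particular S is not isomorphic to the Laurent polynomial ring k[x, x⁻¹] (which has no zero divisors). -/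
open LaurentPolynomial

/-- The free `k`-algebra on the eight generators `h_{ij}, h*_{ij}` (`1 ≤ i, j ≤ 2`). -/
abbrev FreeBergman (k : Type*) [CommRing k] : Type _ :=
  FreeAlgebra k ((Fin 2 × Fin 2) ⊕ (Fin 2 × Fin 2))

/-- The matrix `h = (h_{ij})` of generators. -/
noncomputable def hMat (k : Type*) [CommRing k] :
    Matrix (Fin 2) (Fin 2) (FreeBergman k) :=
  Matrix.of fun i j => FreeAlgebra.ι k (Sum.inl (i, j))

/-- The matrix `h* = (h*_{ij})` of generators. -/
noncomputable def hStarMat (k : Type*) [CommRing k] :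
    Matrix (Fin 2) (Fin 2) (FreeBergman k) :=
  Matrix.of fun i j => FreeAlgebra.ι k (Sum.inr (i, j))

/-- The idempotent matrix `e ∈ M_2` with `1` at position `(1,1)` and zeros elsewhere,
viewed over the free algebra. -/
noncomputable def eMat (k : Type*) [CommRing k] :
    Matrix (Fin 2) (Fin 2) (FreeBergman k) :=
  Matrix.single 0 0 1

/-- Only the relations `h·h* = e` and `h*·h = e`, imposed entrywise. -/
inductive BergmanRel' (k : Type*) [CommRing k] : FreeBergman k → FreeBergman k → Prop
  | hhs (i j : Fin 2) : BergmanRel' k ((hMat k * hStarMat k) i j) (eMat k i j)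
  | hsh (i j : Fin 2) : BergmanRel' k ((hStarMat k * hMat k) i j) (eMat k i j)

/-!
In any monoid, `a * b = e = b * a` forces `e * a = a * b * a = a * e`. Applied to `h` and `e`
in `M_2(S)`, this says that `h` commutes with the matrix unit `e`, so its off-diagonal entries
vanish, and then the `(1,1)` and `(2,2)` entries of `h·h* = e` read `h₁₁ h*₁₁ = 1` and
`h₂₂ h*₂₂ = 0`. The elements `h₂₂` and `h*₂₂` are nonzero because `h, h* ↦ diag(1, ε)` satisfies
the relations over the dual numbers `k[ε]`. Hence `S` has zero divisors, unlike `k[x, x⁻¹]`.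
-/

open Matrix

theorem commute_of_mul_eq_of_mul_eq {M : Type*} [Monoid M] {a b e : M}
    (hab : a * b = e) (hba : b * a = e) : Commute e a :=
  calc e * a = a * (b * a) := by rw [← hab, mul_assoc]
    _ = a * e := by rw [hba]

theorem DualNumber.eps_ne_zero {R : Type*} [Semiring R] [Nontrivial R] :
    (DualNumber.eps : DualNumber R) ≠ 0 := fun h =>
  one_ne_zero (congrArg TrivSqZeroExt.snd h)

namespace Bergman

variable {k : Type*} [CommRing k]

section lift

variable {A : Type*} [Semiring A] [Algebra k A]

noncomputable def freeLift (P Q : Matrix (Fin 2) (Fin 2) A) : FreeBergman k →ₐ[k] A :=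
  FreeAlgebra.lift k (Sum.elim (fun ij => P ij.1 ij.2) (fun ij => Q ij.1 ij.2))

theorem map_hMat_freeLift (P Q : Matrix (Fin 2) (Fin 2) A) :
    (hMat k).map (freeLift P Q) = P := by
  ext i j
  simp [hMat, freeLift]

theorem map_hStarMat_freeLift (P Q : Matrix (Fin 2) (Fin 2) A) :
    (hStarMat k).map (freeLift P Q) = Q := by
  ext i j
  simp [hStarMat, freeLift]

theorem map_eMat (f : FreeBergman k →ₐ[k] A) : (eMat k).map f = single 0 0 1 := by
  simp [eMat]

noncomputable def lift (P Q : Matrix (Fin 2) (Fin 2) A)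
    (hPQ : P * Q = single 0 0 1) (hQP : Q * P = single 0 0 1) :
    RingQuot (BergmanRel' k) →ₐ[k] A :=
  RingQuot.liftAlgHom k ⟨freeLift P Q, by
    rintro _ _ (⟨i, j⟩ | ⟨i, j⟩)
    · change ((hMat k * hStarMat k).map (freeLift P Q)) i j = (eMat k).map (freeLift P Q) i j
      rw [Matrix.map_mul, map_hMat_freeLift, map_hStarMat_freeLift, map_eMat, hPQ]
    · change ((hStarMat k * hMat k).map (freeLift P Q)) i j = (eMat k).map (freeLift P Q) i j
      rw [Matrix.map_mul, map_hMat_freeLift, map_hStarMat_freeLift, map_eMat, hQP]⟩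

end lift

variable (k)

noncomputable def quotH : Matrix (Fin 2) (Fin 2) (RingQuot (BergmanRel' k)) :=
  (hMat k).map (RingQuot.mkAlgHom k (BergmanRel' k))

noncomputable def quotHStar : Matrix (Fin 2) (Fin 2) (RingQuot (BergmanRel' k)) :=
  (hStarMat k).map (RingQuot.mkAlgHom k (BergmanRel' k))

theorem quotH_mul_quotHStar : quotH k * quotHStar k = single 0 0 1 := by
  rw [quotH, quotHStar, ← Matrix.map_mul, ← map_eMat (RingQuot.mkAlgHom k (BergmanRel' k))]
  ext i j
  exact RingQuot.mkAlgHom_rel k (BergmanRel'.hhs i j)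

theorem quotHStar_mul_quotH : quotHStar k * quotH k = single 0 0 1 := by
  rw [quotH, quotHStar, ← Matrix.map_mul, ← map_eMat (RingQuot.mkAlgHom k (BergmanRel' k))]
  ext i j
  exact RingQuot.mkAlgHom_rel k (BergmanRel'.hsh i j)

theorem commute_single_quotH : Commute (single 0 0 1) (quotH k) :=
  commute_of_mul_eq_of_mul_eq (quotH_mul_quotHStar k) (quotHStar_mul_quotH k)

theorem quotH_zero_one : quotH k 0 1 = 0 :=
  row_eq_zero_of_commute_single (commute_single_quotH k) (by decide)

theorem quotH_one_zero : quotH k 1 0 = 0 :=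
  col_eq_zero_of_commute_single (commute_single_quotH k) (by decide)

theorem quotH_mul_quotHStar_apply (i j : Fin 2) :
    quotH k i 0 * quotHStar k 0 j + quotH k i 1 * quotHStar k 1 j = single 0 0 1 i j := by
  rw [← quotH_mul_quotHStar, mul_apply, Fin.sum_univ_two]

theorem quotH_zero_zero_mul_quotHStar_zero_zero : quotH k 0 0 * quotHStar k 0 0 = 1 := by
  simpa [quotH_zero_one] using quotH_mul_quotHStar_apply k 0 0

theorem quotH_one_one_mul_quotHStar_one_one : quotH k 1 1 * quotHStar k 1 1 = 0 := by
  simpa [quotH_one_zero] using quotH_mul_quotHStar_apply k 1 1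

noncomputable def dualDiag : Matrix (Fin 2) (Fin 2) (DualNumber k) :=
  diagonal ![1, DualNumber.eps]

theorem dualDiag_mul_self : dualDiag k * dualDiag k = single 0 0 1 := by
  rw [dualDiag, diagonal_mul_diagonal]
  ext i j : 1
  fin_cases i <;> fin_cases j <;> simp [DualNumber.eps_mul_eps]

noncomputable def toDual : RingQuot (BergmanRel' k) →ₐ[k] DualNumber k :=
  lift (dualDiag k) (dualDiag k) (dualDiag_mul_self k) (dualDiag_mul_self k)

theorem toDual_quotH_one_one : toDual k (quotH k 1 1) = DualNumber.eps := by
  simp [toDual, lift, quotH, RingQuot.liftAlgHom_mkAlgHom_apply, hMat, freeLift, dualDiag]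

theorem toDual_quotHStar_one_one : toDual k (quotHStar k 1 1) = DualNumber.eps := by
  simp [toDual, lift, quotHStar, RingQuot.liftAlgHom_mkAlgHom_apply, hStarMat, freeLift,
    dualDiag]

theorem quotH_one_one_ne_zero [Nontrivial k] : quotH k 1 1 ≠ 0 := fun h =>
  DualNumber.eps_ne_zero (by rw [← toDual_quotH_one_one, h, map_zero])

theorem quotHStar_one_one_ne_zero [Nontrivial k] : quotHStar k 1 1 ≠ 0 := fun h =>
  DualNumber.eps_ne_zero (by rw [← toDual_quotHStar_one_one, h, map_zero])

end Bergman

open Bergman in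
/-- Let `k` be an integral domain and let `S` be the quotient of the free `k`-algebra on
eight generators `h_{ij}, h*_{ij}` by the two-sided ideal generated by the entries of the
matrix identities `h·h* = e` and `h*·h = e` only, where `e` has a `1` at position `(1,1)`
and zeros elsewhere.  Then in `S`: `h_{11}·h*_{11} = 1`, `h_{12}·h*_{21} = 0`, the elements
`h_{22}` and `h*_{22}` are nonzero, `S` has zero divisors, and `S` is not isomorphic to
the Laurent polynomial ring `k[x, x⁻¹]`. -/
theorem bergman_without_corner_relations (k : Type*) [CommRing k] [IsDomain k] :
    RingQuot.mkAlgHom k (BergmanRel' k) (hMat k 0 0) *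
        RingQuot.mkAlgHom k (BergmanRel' k) (hStarMat k 0 0) = 1 ∧
    RingQuot.mkAlgHom k (BergmanRel' k) (hMat k 0 1) *
        RingQuot.mkAlgHom k (BergmanRel' k) (hStarMat k 1 0) = 0 ∧
    RingQuot.mkAlgHom k (BergmanRel' k) (hMat k 1 1) ≠ 0 ∧
    RingQuot.mkAlgHom k (BergmanRel' k) (hStarMat k 1 1) ≠ 0 ∧
    (∃ a b : RingQuot (BergmanRel' k), a ≠ 0 ∧ b ≠ 0 ∧ a * b = 0) ∧
    ¬ Nonempty (RingQuot (BergmanRel' k) ≃ₐ[k] LaurentPolynomial k) := by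
  have hd := quotH_one_one_ne_zero k
  have hd' := quotHStar_one_one_ne_zero k
  have hdd' := quotH_one_one_mul_quotHStar_one_one k
  refine ⟨quotH_zero_zero_mul_quotHStar_zero_zero k, ?_, hd, hd', ⟨_, _, hd, hd', hdd'⟩, ?_⟩
  · change quotH k 0 1 * quotHStar k 1 0 = 0
    rw [quotH_zero_one, zero_mul]
  · rintro ⟨φ⟩
    have := φ.injective.noZeroDivisors φ (map_zero φ) (map_mul φ)
    exact hd ((mul_eq_zero.mp hdd').resolve_right hd')
end
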